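/- Let n ≥ 1 be an integer and let L : ℝ^n → ℝ be a linear map. If there is a unique point z ∈ F_n^+ with L(z) = min{L(x) : x ∈ F_n^+}, then z is the unique point of V_n^+(ℝ) satisfying L(z) = min{L(x) : x ∈ V_n^+(ℝ)}; that is, L(z) < L(x) for every x ∈ V_n^+(ℝ) with x ≠ z. -/

import Mathlib

/-!
`V_n^+(ℝ)` is a compact polytope in standard form `{x ≥ 0 | A_n x = b}`. At an extreme point the
columns of `A_n` on the support are linearly independent, so there are at most two nonzero
entries. Any two columns of `A_n` are independent (d'Ocagne's identity), so a point of
`V_n^+(ℝ)` supported on `{k, ℓ}` is forced to be `y_n(k, ℓ)`, and its sign at `k` forces `ℓ - k`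
odd (after moving `k` next to `ℓ` when that entry vanishes). Hence every extreme point lies in
`F_n^+ ⊆ V_n^+(ℝ)`, and by Krein–Milman `L` is minimised over `V_n^+(ℝ)` at `z`. The minimising
face is exposed, so its extreme points are extreme points of `V_n^+(ℝ)`, i.e. minimisers of `L`
on `F_n^+`, i.e. `z`; by Krein–Milman again the face is `{z}`.
-/

/-- The vector y_n(k,ℓ) ∈ ℝ^n (1-indexed), with y_k = (-1)^{ℓ-k+1} f_{n-ℓ}/f_{ℓ-k},
y_ℓ = f_{n-k}/f_{ℓ-k}, and y_i = 0 otherwise. -/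
noncomputable def yVec (n k l : ℕ) : Fin n → ℝ := fun i =>
  if (i : ℕ) + 1 = k then (-1 : ℝ) ^ (l - k + 1) * (Nat.fib (n - l) : ℝ) / (Nat.fib (l - k) : ℝ)
  else if (i : ℕ) + 1 = l then (Nat.fib (n - k) : ℝ) / (Nat.fib (l - k) : ℝ)
  else 0

/-- The 2×n matrix A_n whose first row is (f_1, …, f_n) and second row is (f_0, …, f_{n-1}). -/
noncomputable def Amat (n : ℕ) : Matrix (Fin 2) (Fin n) ℝ :=
  Matrix.of fun r j => if r = 0 then (Nat.fib ((j : ℕ) + 1) : ℝ) else (Nat.fib (j : ℕ) : ℝ)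

/-- V_n^+(ℝ): the set of x ∈ ℝ^n with A_n x = (f_n, f_{n-1})^T and all entries nonnegative. -/
def Vplus (n : ℕ) : Set (Fin n → ℝ) :=
  {x | (Amat n).mulVec x = ![(Nat.fib n : ℝ), (Nat.fib (n - 1) : ℝ)] ∧ ∀ i, 0 ≤ x i}

/-- F_n^+ = {y_n(k,ℓ) : 1 ≤ k < ℓ ≤ n with ℓ − k odd}. -/
def FplusSet (n : ℕ) : Set (Fin n → ℝ) :=
  {v | ∃ k l : ℕ, 1 ≤ k ∧ k < l ∧ l ≤ n ∧ Odd (l - k) ∧ v = yVec n k l}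

/-- V_n^+(ℤ): elements of V_n^+(ℝ) with all entries integers. -/
def VplusZ (n : ℕ) : Set (Fin n → ℝ) :=
  {x | x ∈ Vplus n ∧ ∀ i, ∃ m : ℤ, x i = (m : ℝ)}

open Matrix Topology

lemma fib_add_mul_fib_add_one (a b : ℕ) :
    (Nat.fib (a + b) : ℝ) * Nat.fib (b + 1)
      = Nat.fib (a + b + 1) * Nat.fib b + (-1) ^ b * Nat.fib a := by
  induction b with
  | zero => simp
  | succ b ih =>
    rw [← add_assoc, Nat.fib_add_two, Nat.fib_add_two, pow_succ]
    push_cast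
    linear_combination (-1 : ℝ) * ih

lemma fib_add_mul_fib_add (a b c : ℕ) :
    (Nat.fib (a + b) : ℝ) * Nat.fib (b + c)
      = Nat.fib (a + b + c) * Nat.fib b + (-1) ^ b * Nat.fib a * Nat.fib c := by
  induction c using Nat.twoStepInduction with
  | zero => simp
  | one => simpa [mul_assoc] using fib_add_mul_fib_add_one a b
  | more c ih₀ ih₁ =>
    rw [← add_assoc, ← add_assoc, Nat.fib_add_two, Nat.fib_add_two, Nat.fib_add_two]
    push_cast
    rw [← add_assoc, ← add_assoc] at ih₁
    linear_combination ih₀ + ih₁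

lemma fib_mul_fib_sub (k l m : ℕ) (hkl : k ≤ l) (hlm : l ≤ m) :
    (Nat.fib l : ℝ) * Nat.fib (m - k)
      = Nat.fib m * Nat.fib (l - k) + (-1) ^ (l - k) * Nat.fib k * Nat.fib (m - l) := by
  have h := fib_add_mul_fib_add k (l - k) (m - l)
  rwa [Nat.add_sub_cancel' hkl, Nat.add_sub_cancel' hlm, add_comm, Nat.sub_add_sub_cancel hlm hkl]
    at h

lemma fib_succ_mul_fib_sub_fib_mul_fib_succ_ne_zero {p q : ℕ} (hpq : p ≠ q) :
    (Nat.fib (p + 1) : ℝ) * Nat.fib q - Nat.fib p * Nat.fib (q + 1) ≠ 0 := by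
  wlog hlt : p < q generalizing p q
  · intro h
    exact this hpq.symm (by omega) (by linear_combination -h)
  have h := fib_add_mul_fib_add_one (q - p) p
  rw [Nat.sub_add_cancel hlt.le] at h
  have hpos : (0 : ℝ) < Nat.fib (q - p) := by exact_mod_cast Nat.fib_pos.mpr (by omega)
  rw [show (Nat.fib (p + 1) : ℝ) * Nat.fib q - Nat.fib p * Nat.fib (q + 1)
      = (-1) ^ p * Nat.fib (q - p) by linear_combination h]
  exact mul_ne_zero (pow_ne_zero _ (by norm_num)) hpos.ne'

section StdPolyhedron

variable {ι m : Type*} [Fintype ι]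

def stdPolyhedron (A : Matrix m ι ℝ) (b : m → ℝ) : Set (ι → ℝ) :=
  {x | A *ᵥ x = b ∧ ∀ i, 0 ≤ x i}

variable {A : Matrix m ι ℝ} {b : m → ℝ} {x : ι → ℝ}

lemma convex_stdPolyhedron : Convex ℝ (stdPolyhedron A b) :=
  ((convex_singleton b).linear_preimage A.mulVecLin).inter (convex_Ici (0 : ι → ℝ))

lemma isClosed_stdPolyhedron : IsClosed (stdPolyhedron A b) :=
  (isClosed_eq (Continuous.matrix_mulVec continuous_const continuous_id) continuous_const).inter
    (isClosed_Ici (a := (0 : ι → ℝ)))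

lemma eq_zero_of_mem_extremePoints_stdPolyhedron (hx : x ∈ (stdPolyhedron A b).extremePoints ℝ)
    {d : ι → ℝ} (hd : A *ᵥ d = 0) (hsupp : ∀ i, x i = 0 → d i = 0) : d = 0 := by
  obtain ⟨ε, hε, hεx⟩ : ∃ ε > 0, ∀ i, ε * |d i| ≤ x i := by
    have hev : ∀ i, ∀ᶠ ε in 𝓝[>] (0 : ℝ), ε * |d i| ≤ x i := fun i => by
      rcases (hx.1.2 i).eq_or_lt with h | h
      · simp [hsupp i h.symm, ← h]
      · have hlim := (continuous_mul_const |d i|).tendsto' 0 0 (zero_mul _)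
        exact nhdsWithin_le_nhds (hlim.eventually (eventually_le_nhds h))
    exact ((Filter.eventually_all.2 hev).and self_mem_nhdsWithin).exists.imp fun ε h => ⟨h.2, h.1⟩
  have hmem : ∀ c : ℝ, |c| ≤ ε → x + c • d ∈ stdPolyhedron A b := fun c hc => by
    refine ⟨by rw [Matrix.mulVec_add, Matrix.mulVec_smul, hd, smul_zero, add_zero, hx.1.1],
      fun i => ?_⟩
    have : |c * d i| ≤ x i :=
      (abs_mul c (d i)).trans_le ((mul_le_mul_of_nonneg_right hc (abs_nonneg _)).trans (hεx i))
    simp only [Pi.add_apply, Pi.smul_apply, smul_eq_mul]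
    linarith [neg_abs_le (c * d i)]
  have hseg : x ∈ openSegment ℝ (x + ε • d) (x + (-ε) • d) :=
    ⟨1 / 2, 1 / 2, by norm_num, by norm_num, by norm_num, by module⟩
  have hεd := hx.2 (hmem ε (abs_of_pos hε).le) (hmem (-ε) (by rw [abs_neg, abs_of_pos hε])) hseg
  exact (smul_eq_zero.1 (add_eq_left.1 hεd)).resolve_left hε.ne'

lemma linearIndepOn_col_of_mem_extremePoints
    (hx : x ∈ (stdPolyhedron A b).extremePoints ℝ) : LinearIndepOn ℝ A.col {i | x i ≠ 0} := by
  rw [linearIndepOn_iff'']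
  intro t g hts hgt hsum i _
  have hAg : A *ᵥ g = 0 := by
    rw [← hsum, Matrix.mulVec_eq_sum, ← Finset.sum_subset (Finset.subset_univ t)
      (fun j _ hj => by rw [hgt j hj, MulOpposite.op_zero, zero_smul])]
    simp only [op_smul_eq_smul, Matrix.col]
  have hg := eq_zero_of_mem_extremePoints_stdPolyhedron hx hAg
    (fun j hj => hgt j fun hjt => hts hjt hj)
  exact congrFun hg i

lemma card_support_le_of_mem_extremePoints [Fintype m]
    (hx : x ∈ (stdPolyhedron A b).extremePoints ℝ) :
    (Finset.univ.filter fun i => x i ≠ 0).card ≤ Fintype.card m := by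
  have h := (linearIndepOn_col_of_mem_extremePoints hx).fintype_card_le_finrank
  rwa [Module.finrank_fintype_fun_eq_card, Fintype.card_ofFinset] at h

end StdPolyhedron

lemma Vplus_eq_stdPolyhedron (n : ℕ) :
    Vplus n = stdPolyhedron (Amat n) ![(Nat.fib n : ℝ), (Nat.fib (n - 1) : ℝ)] := rfl

section Support

variable {n : ℕ} {p q : Fin n} {x : Fin n → ℝ}

lemma Amat_mulVec_of_support (hpq : p ≠ q) (hx : ∀ s, s ≠ p → s ≠ q → x s = 0) :
    Amat n *ᵥ x = ![Nat.fib (p + 1) * x p + Nat.fib (q + 1) * x q,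
      Nat.fib p * x p + Nat.fib q * x q] := by
  ext r
  fin_cases r <;>
  · simp only [Matrix.mulVec, dotProduct, Amat, Matrix.of_apply]
    rw [Fintype.sum_eq_add p q hpq fun s hs => by simp [hx s hs.1 hs.2]]
    simp

lemma eq_zero_of_Amat_mulVec_eq_zero (hpq : p ≠ q) (hx : ∀ s, s ≠ p → s ≠ q → x s = 0)
    (hAx : Amat n *ᵥ x = 0) : x = 0 := by
  rw [Amat_mulVec_of_support hpq hx] at hAx
  have row₀ := congrFun hAx 0
  have row₁ := congrFun hAx 1
  simp only [Matrix.cons_val_zero, Matrix.cons_val_one, Pi.zero_apply] at row₀ row₁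
  have hdet := fib_succ_mul_fib_sub_fib_mul_fib_succ_ne_zero (Fin.val_ne_of_ne hpq)
  set D : ℝ := Nat.fib (p + 1) * Nat.fib q - Nat.fib p * Nat.fib (q + 1)
  have hDp : D * x p = 0 := by linear_combination Nat.fib q * row₀ - Nat.fib (q + 1) * row₁
  have hDq : D * x q = 0 := by linear_combination Nat.fib (p + 1) * row₁ - Nat.fib p * row₀
  have hxp := (mul_eq_zero.1 hDp).resolve_left hdet
  have hxq := (mul_eq_zero.1 hDq).resolve_left hdet
  ext s
  by_cases hsp : s = p
  · rw [hsp, hxp, Pi.zero_apply]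
  by_cases hsq : s = q
  · rw [hsq, hxq, Pi.zero_apply]
  exact hx s hsp hsq

lemma yVec_apply_left :
    yVec n (p + 1) (q + 1) p = -(-1) ^ (q - p : ℕ) * Nat.fib (n - (q + 1)) / Nat.fib (q - p) := by
  simp [yVec, Nat.add_sub_add_right, pow_succ]

lemma yVec_apply_right (hpq : p ≠ q) :
    yVec n (p + 1) (q + 1) q = Nat.fib (n - (p + 1)) / Nat.fib (q - p) := by
  simp [yVec, Nat.add_sub_add_right, Fin.val_ne_of_ne hpq.symm]

lemma yVec_apply_of_ne {s : Fin n} (hsp : s ≠ p) (hsq : s ≠ q) : yVec n (p + 1) (q + 1) s = 0 := by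
  simp [yVec, Fin.val_ne_of_ne hsp, Fin.val_ne_of_ne hsq]

lemma Amat_mulVec_yVec (hpq : p < q) :
    Amat n *ᵥ yVec n (p + 1) (q + 1) = ![(Nat.fib n : ℝ), (Nat.fib (n - 1) : ℝ)] := by
  have hqp : (p : ℕ) < q := hpq
  have hfib : (Nat.fib (q - p) : ℝ) ≠ 0 := by exact_mod_cast (Nat.fib_pos.2 (by omega)).ne'
  rw [Amat_mulVec_of_support hpq.ne (fun s => yVec_apply_of_ne), yVec_apply_left,
    yVec_apply_right hpq.ne]
  have row₀ := fib_mul_fib_sub (p + 1) (q + 1) n (by omega) (by omega)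
  have row₁ := fib_mul_fib_sub p q (n - 1) hqp.le (by omega)
  rw [Nat.add_sub_add_right] at row₀
  rw [show n - 1 - p = n - (p + 1) by omega, show n - 1 - q = n - (q + 1) by omega] at row₁
  ext r
  fin_cases r
  · simp only [Fin.zero_eta, Matrix.cons_val_zero]
    field_simp
    linear_combination row₀
  · simp only [Fin.mk_one, Matrix.cons_val_one, Matrix.cons_val_zero]
    field_simp
    linear_combination row₁

end Support

section Classification

variable {n : ℕ} {p q : Fin n} {x : Fin n → ℝ}

lemma eq_yVec_of_support (hpq : p < q)
    (hAx : Amat n *ᵥ x = ![(Nat.fib n : ℝ), (Nat.fib (n - 1) : ℝ)])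
    (hx : ∀ s, s ≠ p → s ≠ q → x s = 0) : x = yVec n (p + 1) (q + 1) :=
  sub_eq_zero.1 <| eq_zero_of_Amat_mulVec_eq_zero hpq.ne
    (fun s hsp hsq => by simp [hx s hsp hsq, yVec_apply_of_ne hsp hsq])
    (by rw [Matrix.mulVec_sub, hAx, Amat_mulVec_yVec hpq, sub_self])

lemma mem_FplusSet_of_support (hpq : p < q) (hx : x ∈ Vplus n)
    (hsupp : ∀ s, s ≠ p → s ≠ q → x s = 0) : x ∈ FplusSet n := by
  have of_odd : ∀ p q : Fin n, p < q → Odd (q - p : ℕ) → (∀ s, s ≠ p → s ≠ q → x s = 0) →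
      x ∈ FplusSet n := fun p q hpq hodd hsupp =>
    ⟨p + 1, q + 1, by omega, by simpa using hpq, q.isLt,
      by simpa [Nat.add_sub_add_right] using hodd, eq_yVec_of_support hpq hx.1 hsupp⟩
  rcases Nat.even_or_odd (q - p : ℕ) with heven | hodd
  · -- the sign of `yVec` at `p` forces `x p = 0`, so `x` is supported on `{q - 1, q}`
    have hxp : x p = 0 := by
      have hval : x p = -(Nat.fib (n - (q + 1)) / Nat.fib (q - p) : ℝ) := by
        rw [eq_yVec_of_support hpq hx.1 hsupp, yVec_apply_left, heven.neg_one_pow]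
        ring
      have : (0 : ℝ) ≤ Nat.fib (n - (q + 1)) / Nat.fib (q - p) := by positivity
      linarith [hx.2 p]
    have hq : 0 < (q : ℕ) := (Nat.zero_le _).trans_lt hpq
    refine of_odd ⟨q - 1, by omega⟩ q (Fin.lt_def.2 (Nat.sub_lt hq one_pos))
      ⟨0, by dsimp only; omega⟩ fun s _ hsq => ?_
    by_cases hsp : s = p
    · rw [hsp, hxp]
    · exact hsupp s hsp hsq
  · exact of_odd p q hpq hodd hsupp

end Classification

lemma FplusSet_subset_Vplus (n : ℕ) : FplusSet n ⊆ Vplus n := by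
  rintro _ ⟨k, l, hk, hkl, hln, hodd, rfl⟩
  obtain ⟨p, rfl⟩ : ∃ p, k = p + 1 := ⟨k - 1, by omega⟩
  obtain ⟨q, rfl⟩ : ∃ q, l = q + 1 := ⟨l - 1, by omega⟩
  refine ⟨Amat_mulVec_yVec (p := ⟨p, by omega⟩) (q := ⟨q, by omega⟩) (Fin.mk_lt_mk.2 (by omega)),
    fun i => ?_⟩
  simp only [yVec]
  split_ifs
  · rw [hodd.add_one.neg_one_pow]
    positivity
  · positivity
  · rfl

lemma le_fib_of_mem_Vplus {n : ℕ} {x : Fin n → ℝ} (hx : x ∈ Vplus n) (i : Fin n) :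
    x i ≤ Nat.fib n := by
  have row₀ : ∑ j : Fin n, (Nat.fib (j + 1) : ℝ) * x j = Nat.fib n := by
    simpa [Matrix.mulVec, dotProduct, Amat] using congrFun hx.1 0
  have hle : (Nat.fib (i + 1) : ℝ) * x i ≤ ∑ j : Fin n, (Nat.fib (j + 1) : ℝ) * x j :=
    Finset.single_le_sum (f := fun j : Fin n => (Nat.fib (j + 1) : ℝ) * x j)
      (fun j _ => mul_nonneg (Nat.cast_nonneg _) (hx.2 j)) (Finset.mem_univ i)
  have hfib : (1 : ℝ) ≤ Nat.fib (i + 1) := by exact_mod_cast Nat.fib_pos.2 i.succ_pos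
  nlinarith [hx.2 i]

lemma isCompact_Vplus (n : ℕ) : IsCompact (Vplus n) :=
  isCompact_Icc.of_isClosed_subset isClosed_stdPolyhedron
    fun _ hx => ⟨hx.2, le_fib_of_mem_Vplus hx⟩

lemma exists_lt_support_subset_pair {ι M : Type*} [Fintype ι] [LinearOrder ι] [Zero M]
    [DecidableEq M] (hι : 2 ≤ Fintype.card ι) {x : ι → M}
    (hx : (Finset.univ.filter fun i => x i ≠ 0).card ≤ 2) :
    ∃ p q, p < q ∧ ∀ s, s ≠ p → s ≠ q → x s = 0 := by
  obtain ⟨t, hst, ht⟩ := Finset.exists_superset_card_eq hx hι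
  obtain ⟨a, b, hab, rfl⟩ := Finset.card_eq_two.1 ht
  have hsupp : ∀ s, s ≠ a → s ≠ b → x s = 0 := fun s hsa hsb => by
    by_contra hs
    simpa [hsa, hsb] using hst (Finset.mem_filter.2 ⟨Finset.mem_univ s, hs⟩)
  rcases hab.lt_or_gt with h | h
  · exact ⟨a, b, h, hsupp⟩
  · exact ⟨b, a, h, fun s hsb hsa => hsupp s hsa hsb⟩

lemma extremePoints_Vplus_subset {n : ℕ} (hn : 2 ≤ n) :
    (Vplus n).extremePoints ℝ ⊆ FplusSet n := by
  intro x hx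
  rw [Vplus_eq_stdPolyhedron] at hx
  obtain ⟨p, q, hpq, hsupp⟩ := exists_lt_support_subset_pair (ι := Fin n) (by simpa using hn)
    (by simpa using card_support_le_of_mem_extremePoints hx)
  exact mem_FplusSet_of_support hpq hx.1 hsupp

theorem IsCompact.subset_of_extremePoints_subset {E : Type*} [AddCommGroup E] [Module ℝ E]
    [TopologicalSpace E] [T2Space E] [IsTopologicalAddGroup E] [ContinuousSMul ℝ E]
    [LocallyConvexSpace ℝ E] {K C : Set E} (hK : IsCompact K) (hKconv : Convex ℝ K)
    (hC : IsClosed C) (hCconv : Convex ℝ C) (h : K.extremePoints ℝ ⊆ C) : K ⊆ C := by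
  rw [← closure_convexHull_extremePoints hK hKconv]
  exact closure_minimal (convexHull_min h hCconv) hC

theorem stmt6_general (n : ℕ) (L : (Fin n → ℝ) →ₗ[ℝ] ℝ) (z : Fin n → ℝ)
    (hzF : z ∈ FplusSet n) (hmin : ∀ x ∈ FplusSet n, L z ≤ L x)
    (huniq : ∀ w ∈ FplusSet n, (∀ x ∈ FplusSet n, L w ≤ L x) → w = z) :
    z ∈ Vplus n ∧ (∀ x ∈ Vplus n, L z ≤ L x) ∧ ∀ x ∈ Vplus n, x ≠ z → L z < L x := by
  have hn : 2 ≤ n := by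
    obtain ⟨k, l, hk, hkl, hln, -⟩ := hzF
    omega
  have hext := extremePoints_Vplus_subset hn
  have hVmin : ∀ x ∈ Vplus n, L z ≤ L x :=
    (isCompact_Vplus n).subset_of_extremePoints_subset convex_stdPolyhedron
      (isClosed_le continuous_const L.continuous_of_finiteDimensional)
      (convex_halfSpace_ge L.isLinear _) fun x hx => hmin x (hext hx)
  -- the face of `Vplus n` on which `L` is minimal (where `-L` is maximal)
  let M := (-LinearMap.toContinuousLinearMap L).toExposed (Vplus n)
  have hM : IsExposed ℝ (Vplus n) M := ContinuousLinearMap.toExposed.isExposed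
  have hMz : M ⊆ {z} := by
    refine (hM.isCompact (isCompact_Vplus n)).subset_of_extremePoints_subset
      (hM.convex convex_stdPolyhedron) isClosed_singleton (convex_singleton z) fun w hw => ?_
    refine huniq w (hext (hM.isExtreme.extremePoints_subset_extremePoints hw)) fun x hx => ?_
    simpa using hw.1.2 x (FplusSet_subset_Vplus n hx)
  refine ⟨FplusSet_subset_Vplus n hzF, hVmin, fun x hx hxz => (hVmin x hx).lt_of_ne fun h => ?_⟩
  exact hxz (hMz ⟨hx, fun y hy => by simpa [← h] using hVmin y hy⟩)

/-- Let n ≥ 1 and L : ℝ^n → ℝ linear. If there is a unique point z ∈ F_n^+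
with L(z) = min{L(x) : x ∈ F_n^+}, then z is the unique point of V_n^+(ℝ) attaining the
minimum of L over V_n^+(ℝ); that is, L(z) < L(x) for every x ∈ V_n^+(ℝ) with x ≠ z. -/
theorem stmt6 (n : ℕ) (hn : 1 ≤ n) (L : (Fin n → ℝ) →ₗ[ℝ] ℝ) (z : Fin n → ℝ)
    (hzF : z ∈ FplusSet n) (hmin : ∀ x ∈ FplusSet n, L z ≤ L x)
    (huniq : ∀ w ∈ FplusSet n, (∀ x ∈ FplusSet n, L w ≤ L x) → w = z) :
    z ∈ Vplus n ∧ (∀ x ∈ Vplus n, L z ≤ L x) ∧ ∀ x ∈ Vplus n, x ≠ z → L z < L x :=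
  stmt6_general n L z hzF hmin huniq
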